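/- arXiv:2501.07023 — 2 statements merged into one kernel-verified Lean document; each statement's English description precedes it below -/
import Mathlib

section
/- Let T be a pruned tree of sequences and λ a Borel probability measure on lim T such that λ({x}) = 0 for every x ∈ lim T, and let Leb denote Lebesgue measure on [0,1]. Then the null ideals N(λ) and N(Leb) are Tukey equivalent, and so are the associated covering systems; explicitly: (1) there exist maps F : N(λ) → N(Leb) and G : N(Leb) → N(λ) such that for all A ∈ N(λ) and B ∈ N(Leb), F(A) ⊆ B implies A ⊆ G(B); (2) there exist maps F' : N(Leb) → N(λ) and G' : N(λ) → N(Leb) such that for all B ∈ N(Leb) and A ∈ N(λ), F'(B) ⊆ A implies B ⊆ G'(A); (3) there exist maps φ : lim T → [0,1] and H : N(Leb) → N(λ) such that for all x ∈ lim T and B ∈ N(Leb), φ(x) ∈ B implies x ∈ H(B); (4) there exist maps ψ : [0,1] → lim T and K : N(λ) → N(Leb) such that for all y ∈ [0,1] and A ∈ N(λ), ψ(y) ∈ A implies y ∈ K(A). -/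
/-!
Push `λ` to `ℝ` along a Borel embedding and compose with the distribution function `F` of the
image measure. As `λ` has no atoms, `F` is continuous, so it carries the image measure onto
Lebesgue measure on `[0,1]`; and `F` is injective off its plateaus, of which there are countably
many, each null. Hence `φ : lim T → [0,1]` is measure preserving and injective on a conull Borel
set, so it has a Borel inverse `ψ` modulo null sets. Preimages under `φ` and `ψ` preserve null
sets, and the identities `ψ ∘ φ = id`, `φ ∘ ψ = id` almost everywhere give the Tukey connections.
-/

open scoped ENNReal
open MeasureTheory

noncomputable section

/-- A tree of sequences: a nonempty set of finite lists of naturals closed under prefixes. -/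
def IsTree (T : Set (List ℕ)) : Prop :=
  T.Nonempty ∧ ∀ s t : List ℕ, s <+: t → t ∈ T → s ∈ T

/-- `t` is a maximal node of `T`: it has no successor in `T`. -/
def IsMaxNode (T : Set (List ℕ)) (t : List ℕ) : Prop :=
  ∀ k : ℕ, t ++ [k] ∉ T

/-- A probability tree on `T`. -/
def IsProbTree (T : Set (List ℕ)) (p : List ℕ → ℕ → ℝ≥0∞) : Prop :=
  ∀ t ∈ T, ¬ IsMaxNode T t →
    (∀ k : ℕ, t ++ [k] ∉ T → p t k = 0) ∧ (∑' k : ℕ, p t k = 1)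

/-- The measure induced by a probability tree: `Ξ_p(t) = ∏_{i<|t|} p (t↾i) (t i)`. -/
def Xi (p : List ℕ → ℕ → ℝ≥0∞) (t : List ℕ) : ℝ≥0∞ :=
  ∏ i ∈ Finset.range t.length, p (t.take i) (t.getD i 0)

/-- An inductive probability measure on `T`. -/
def IsIPM (T : Set (List ℕ)) (ξ : List ℕ → ℝ≥0∞) : Prop :=
  ξ [] = 1 ∧ ∀ t ∈ T, ¬ IsMaxNode T t →
    ξ t = ∑' k : {k : ℕ // t ++ [k] ∈ T}, ξ (t ++ [k.1])

/-- The set of infinite branches of `T`. -/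
def limT (T : Set (List ℕ)) : Set (ℕ → ℕ) :=
  {x | ∀ n : ℕ, (List.range n).map x ∈ T}

/-- `T` is pruned: every node has a successor in `T`. -/
def Pruned (T : Set (List ℕ)) : Prop := ∀ t ∈ T, ∃ k : ℕ, t ++ [k] ∈ T

/-- The basic clopen set `[t]` of branches through `t`. -/
def cyl (T : Set (List ℕ)) (t : List ℕ) : Set ↥(limT T) :=
  {x | (List.range t.length).map x.1 = t}

/-- The null ideal of a (Borel) measure: sets covered by a measurable set of measure zero. -/
def NullIdeal {Z : Type*} [MeasurableSpace Z] (ν : Measure Z) : Set (Set Z) :=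
  {A | ∃ N : Set Z, A ⊆ N ∧ MeasurableSet N ∧ ν N = 0}

/-- Lebesgue measure on the unit interval `[0,1]`. -/
def LebI : Measure ↥(Set.Icc (0 : ℝ) 1) :=
  Measure.comap Subtype.val volume

open Set ProbabilityTheory unitInterval

namespace ProbabilityTheory

section AtomlessCDF

variable {μ : Measure ℝ} [IsProbabilityMeasure μ] [NullSingletonClass μ]

theorem continuous_cdf : Continuous (cdf μ) := by
  refine continuous_iff_continuousAt.2 fun x => ?_
  rw [(monotone_cdf μ).continuousAt_iff_leftLim_eq_rightLim, StieltjesFunction.rightLim_eq]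
  have h := (cdf μ).measure_singleton x
  rw [measure_cdf, measure_singleton, eq_comm, ENNReal.ofReal_eq_zero, sub_nonpos] at h
  exact le_antisymm ((monotone_cdf μ).leftLim_le le_rfl) h

theorem measure_cdf_le {a : ℝ} (ha₀ : 0 ≤ a) (ha₁ : a < 1) :
    μ {x | cdf μ x ≤ a} = ENNReal.ofReal a := by
  set S := {x | cdf μ x ≤ a}
  rcases S.eq_empty_or_nonempty with hS | hS
  · obtain rfl : a = 0 := by
      refine le_antisymm (not_lt.1 fun ha => ?_) ha₀
      obtain ⟨x, hx⟩ := ((tendsto_cdf_atBot μ).eventually (gt_mem_nhds ha)).exists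
      exact hS.subset hx.le
    simp [hS]
  obtain ⟨b, hb⟩ := ((tendsto_cdf_atTop μ).eventually (lt_mem_nhds ha₁)).exists
  have hSb : S ⊆ Iic b := fun x hx =>
    not_lt.1 fun hbx => (hb.trans_le (monotone_cdf μ hbx.le)).not_ge hx
  set u := sSup S
  have hu : u ∈ S := (isClosed_le continuous_cdf continuous_const).csSup_mem hS ⟨b, hSb⟩
  have hSu : S = Iic u := Subset.antisymm (fun x hx => le_csSup ⟨b, hSb⟩ hx)
    fun x hx => (monotone_cdf μ hx).trans hu
  have hcu : cdf μ u = a := by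
    obtain ⟨c, hc, hca⟩ :=
      intermediate_value_Icc (hSb hu) continuous_cdf.continuousOn ⟨hu, hb.le⟩
    have hcS : c ∈ S := hca.le
    rw [hSu] at hcS
    rwa [← le_antisymm hcS hc.1]
  rw [hSu, ← ofReal_cdf, hcu]

end AtomlessCDF

def cdfToUnitInterval (μ : Measure ℝ) (x : ℝ) : I :=
  ⟨cdf μ x, cdf_nonneg μ x, cdf_le_one μ x⟩

theorem monotone_cdfToUnitInterval {μ : Measure ℝ} : Monotone (cdfToUnitInterval μ) :=
  fun _ _ h => Subtype.mk_le_mk.2 (monotone_cdf μ h)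

theorem measurePreserving_cdfToUnitInterval {μ : Measure ℝ} [IsProbabilityMeasure μ]
    [NullSingletonClass μ] : MeasurePreserving (cdfToUnitInterval μ) μ volume := by
  have hmeas : Measurable (cdfToUnitInterval μ) := (continuous_cdf.subtype_mk _).measurable
  refine ⟨hmeas, Measure.ext_of_Iic _ _ fun a => ?_⟩
  rw [Measure.map_apply hmeas measurableSet_Iic, volume_Iic]
  rcases a.2.2.lt_or_eq with ha | ha
  · exact measure_cdf_le a.2.1 ha
  · have : cdfToUnitInterval μ ⁻¹' Iic a = univ :=
      eq_univ_of_forall fun x => show cdf μ x ≤ a from ha ▸ cdf_le_one μ x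
    simp [this, ha]

end ProbabilityTheory

section Plateau

variable {β : Type*} {f : ℝ → β}

def plateauSet (f : ℝ → β) : Set ℝ := ⋃ q : ℚ, Ioi (q : ℝ) ∩ f ⁻¹' {f q}

theorem Monotone.injOn_compl_plateauSet [PartialOrder β] (hf : Monotone f) :
    InjOn f (plateauSet f)ᶜ := by
  have key : ∀ x y, x < y → f x = f y → y ∈ plateauSet f := fun x y hxy hfxy => by
    obtain ⟨q, hxq, hqy⟩ := exists_rat_btwn hxy
    exact mem_iUnion.2 ⟨q, hqy, le_antisymm (hfxy ▸ hf hxq.le) (hf hqy.le)⟩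
  intro x hx y hy hfxy
  rcases lt_trichotomy x y with h | h | h
  · exact absurd (key x y h hfxy) hy
  · exact h
  · exact absurd (key y x h hfxy.symm) hx

theorem measurableSet_plateauSet [MeasurableSpace β] [MeasurableSingletonClass β]
    (hf : Measurable f) : MeasurableSet (plateauSet f) :=
  .iUnion fun _ => measurableSet_Ioi.inter (hf (measurableSet_singleton _))

theorem measure_plateauSet {μ : Measure ℝ} (hf : ∀ b, μ (f ⁻¹' {b}) = 0) :
    μ (plateauSet f) = 0 :=
  measure_iUnion_null fun q => measure_mono_null inter_subset_right (hf (f q))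

end Plateau

namespace MeasureTheory

theorem exists_measurePreserving_unitInterval_injOn {X : Type*} [MeasurableSpace X]
    [StandardBorelSpace X] (μ : Measure X) [IsProbabilityMeasure μ] [NullSingletonClass μ] :
    ∃ φ : X → I, MeasurePreserving φ μ volume ∧
      ∃ G : Set X, MeasurableSet G ∧ μ Gᶜ = 0 ∧ InjOn φ G := by
  obtain ⟨e, he⟩ := exists_measurableEmbedding_real X
  set ν := μ.map e
  have : IsProbabilityMeasure ν := Measure.isProbabilityMeasure_map he.measurable.aemeasurable
  have : NullSingletonClass ν := ⟨fun r => by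
    rw [he.map_apply]
    exact (subsingleton_singleton.preimage he.injective).measure_zero μ⟩
  have hF := measurePreserving_cdfToUnitInterval (μ := ν)
  set F := cdfToUnitInterval ν
  refine ⟨F ∘ e, hF.comp ⟨he.measurable, rfl⟩, e ⁻¹' (plateauSet F)ᶜ,
    he.measurable (measurableSet_plateauSet hF.measurable).compl, ?_,
    monotone_cdfToUnitInterval.injOn_compl_plateauSet.comp he.injective.injOn
      (mapsTo_preimage _ _)⟩
  rw [← preimage_compl, compl_compl, ← he.map_apply]
  exact measure_plateauSet fun b =>
    (hF.measure_preimage (measurableSet_singleton b).nullMeasurableSet).trans (measure_singleton b)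

namespace MeasurePreserving

variable {X Y : Type*} [MeasurableSpace X] [MeasurableSpace Y] {μ : Measure X} {ν : Measure Y}
  {φ : X → Y}

theorem of_ae_leftInverse {ψ : Y → X} (hφ : MeasurePreserving φ μ ν) (hψ : Measurable ψ)
    (h : ∀ᵐ x ∂μ, ψ (φ x) = x) : MeasurePreserving ψ ν μ :=
  ⟨hψ, by
    rw [← hφ.map_eq, Measure.map_map hψ hφ.measurable]
    exact (Measure.map_congr (g := id) h).trans Measure.map_id⟩

theorem exists_ae_inverse_of_injOn [StandardBorelSpace X] [Nonempty X]
    [MeasurableSpace.CountablySeparated Y] (hφ : MeasurePreserving φ μ ν) {G : Set X}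
    (hG : MeasurableSet G) (hGc : μ Gᶜ = 0) (hinj : InjOn φ G) :
    ∃ ψ : Y → X, MeasurePreserving ψ ν μ ∧ (∀ᵐ x ∂μ, ψ (φ x) = x) ∧ ∀ᵐ y ∂ν, φ (ψ y) = y := by
  have := hG.standardBorel
  have he : MeasurableEmbedding (G.domRestrict φ) :=
    (hφ.measurable.comp measurable_subtype_coe).measurableEmbedding (injOn_iff_injective.1 hinj)
  set ψ : Y → X := Function.extend (G.domRestrict φ) Subtype.val fun _ => Classical.arbitrary X
  have hψ : Measurable ψ := he.measurable_extend measurable_subtype_coe measurable_const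
  have hψφ : ∀ x ∈ G, ψ (φ x) = x := fun x hx => he.injective.extend_apply _ _ ⟨x, hx⟩
  have hψφ_ae : ∀ᵐ x ∂μ, ψ (φ x) = x := (ae_iff.2 hGc).mono hψφ
  have hrange : ∀ᵐ y ∂ν, y ∈ range (G.domRestrict φ) := by
    change ν (range _)ᶜ = 0
    rw [← hφ.measure_preimage he.measurableSet_range.compl.nullMeasurableSet]
    exact measure_mono_null (fun x hx hxG => hx ⟨⟨x, hxG⟩, rfl⟩) hGc
  refine ⟨ψ, hφ.of_ae_leftInverse hψ hψφ_ae, hψφ_ae, hrange.mono ?_⟩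
  rintro _ ⟨x, rfl⟩
  exact congrArg φ (hψφ x x.2)

end MeasurePreserving

end MeasureTheory

section NullIdeal

variable {X Y : Type*} [MeasurableSpace X] [MeasurableSpace Y] {μ : Measure X} {ν : Measure Y}
  {φ : X → Y}

theorem mem_nullIdeal_iff {s : Set X} : s ∈ NullIdeal μ ↔ μ s = 0 :=
  ⟨fun ⟨_, hsN, _, hN⟩ => measure_mono_null hsN hN, exists_measurable_superset_of_null⟩

theorem MeasureTheory.Measure.QuasiMeasurePreserving.preimage_mem_nullIdeal
    (hφ : Measure.QuasiMeasurePreserving φ μ ν) {s : Set Y} (hs : s ∈ NullIdeal ν) :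
    φ ⁻¹' s ∈ NullIdeal μ :=
  mem_nullIdeal_iff.2 (hφ.preimage_null (mem_nullIdeal_iff.1 hs))

theorem exists_nullIdeal_cover_of_quasiMeasurePreserving
    (hφ : Measure.QuasiMeasurePreserving φ μ ν) :
    ∃ H : NullIdeal ν → NullIdeal μ, ∀ (x : X) (B : NullIdeal ν), φ x ∈ B.1 → x ∈ (H B).1 :=
  ⟨fun B => ⟨φ ⁻¹' B, hφ.preimage_mem_nullIdeal B.2⟩, fun _ _ h => h⟩

theorem exists_nullIdeal_tukey_of_ae_leftInverse {ψ : Y → X}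
    (hφ : Measure.QuasiMeasurePreserving φ μ ν) (hψ : Measure.QuasiMeasurePreserving ψ ν μ)
    (h : ∀ᵐ x ∂μ, ψ (φ x) = x) :
    ∃ F : NullIdeal μ → NullIdeal ν, ∃ G : NullIdeal ν → NullIdeal μ,
      ∀ A B, (F A).1 ⊆ B.1 → A.1 ⊆ (G B).1 := by
  refine ⟨fun A => ⟨ψ ⁻¹' A, hψ.preimage_mem_nullIdeal A.2⟩,
    fun B => ⟨φ ⁻¹' B ∪ {x | ψ (φ x) ≠ x}, mem_nullIdeal_iff.2
      (measure_union_null (mem_nullIdeal_iff.1 (hφ.preimage_mem_nullIdeal B.2)) (ae_iff.1 h))⟩,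
    fun A B hAB x hx => ?_⟩
  by_cases hx' : ψ (φ x) = x
  · exact Or.inl (hAB (show ψ (φ x) ∈ A.1 from hx'.symm ▸ hx))
  · exact Or.inr hx'

end NullIdeal

theorem isClosed_limT (T : Set (List ℕ)) : IsClosed (limT T) := by
  have h : limT T = ⋂ n, (fun x : ℕ → ℕ => fun i : Fin n => x i) ⁻¹' {f | List.ofFn f ∈ T} := by
    ext x
    simp [limT, List.ofFn_eq_map, ← List.map_coe_finRange_eq_range, List.map_map,
      Function.comp_def]
  rw [h]
  exact isClosed_iInter fun n =>
    (isClosed_discrete _).preimage (continuous_pi fun i => continuous_apply _)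

theorem stmt17_general (T : Set (List ℕ)) (lam : Measure ↥(limT T)) (hlam : IsProbabilityMeasure lam)
    (hfree : ∀ x : ↥(limT T), lam {x} = 0) :
    (∃ F : ↥(NullIdeal lam) → ↥(NullIdeal LebI),
      ∃ G : ↥(NullIdeal LebI) → ↥(NullIdeal lam),
        ∀ (A : ↥(NullIdeal lam)) (B : ↥(NullIdeal LebI)),
          (F A).1 ⊆ B.1 → A.1 ⊆ (G B).1) ∧
    (∃ F' : ↥(NullIdeal LebI) → ↥(NullIdeal lam),
      ∃ G' : ↥(NullIdeal lam) → ↥(NullIdeal LebI),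
        ∀ (B : ↥(NullIdeal LebI)) (A : ↥(NullIdeal lam)),
          (F' B).1 ⊆ A.1 → B.1 ⊆ (G' A).1) ∧
    (∃ φ : ↥(limT T) → ↥(Set.Icc (0 : ℝ) 1),
      ∃ H : ↥(NullIdeal LebI) → ↥(NullIdeal lam),
        ∀ (x : ↥(limT T)) (B : ↥(NullIdeal LebI)),
          φ x ∈ B.1 → x ∈ (H B).1) ∧
    (∃ ψ : ↥(Set.Icc (0 : ℝ) 1) → ↥(limT T),
      ∃ K : ↥(NullIdeal lam) → ↥(NullIdeal LebI),
        ∀ (y : ↥(Set.Icc (0 : ℝ) 1)) (A : ↥(NullIdeal lam)),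
          ψ y ∈ A.1 → y ∈ (K A).1) := by
  have := (isClosed_limT T).polishSpace
  have := nonempty_of_isProbabilityMeasure lam
  have : NullSingletonClass lam := ⟨hfree⟩
  obtain ⟨φ, hφ, G, hG, hGc, hinj⟩ := exists_measurePreserving_unitInterval_injOn lam
  obtain ⟨ψ, hψ, hψφ, hφψ⟩ := hφ.exists_ae_inverse_of_injOn hG hGc hinj
  exact ⟨exists_nullIdeal_tukey_of_ae_leftInverse hφ.quasiMeasurePreserving
      hψ.quasiMeasurePreserving hψφ,
    exists_nullIdeal_tukey_of_ae_leftInverse hψ.quasiMeasurePreserving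
      hφ.quasiMeasurePreserving hφψ,
    ⟨φ, exists_nullIdeal_cover_of_quasiMeasurePreserving hφ.quasiMeasurePreserving⟩,
    ⟨ψ, exists_nullIdeal_cover_of_quasiMeasurePreserving hψ.quasiMeasurePreserving⟩⟩

theorem stmt17 (T : Set (List ℕ)) (hT : IsTree T) (hpr : Pruned T)
    (lam : Measure ↥(limT T)) (hlam : IsProbabilityMeasure lam)
    (hfree : ∀ x : ↥(limT T), lam {x} = 0) :
    (∃ F : ↥(NullIdeal lam) → ↥(NullIdeal LebI),
      ∃ G : ↥(NullIdeal LebI) → ↥(NullIdeal lam),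
        ∀ (A : ↥(NullIdeal lam)) (B : ↥(NullIdeal LebI)),
          (F A).1 ⊆ B.1 → A.1 ⊆ (G B).1) ∧
    (∃ F' : ↥(NullIdeal LebI) → ↥(NullIdeal lam),
      ∃ G' : ↥(NullIdeal lam) → ↥(NullIdeal LebI),
        ∀ (B : ↥(NullIdeal LebI)) (A : ↥(NullIdeal lam)),
          (F' B).1 ⊆ A.1 → B.1 ⊆ (G' A).1) ∧
    (∃ φ : ↥(limT T) → ↥(Set.Icc (0 : ℝ) 1),
      ∃ H : ↥(NullIdeal LebI) → ↥(NullIdeal lam),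
        ∀ (x : ↥(limT T)) (B : ↥(NullIdeal LebI)),
          φ x ∈ B.1 → x ∈ (H B).1) ∧
    (∃ ψ : ↥(Set.Icc (0 : ℝ) 1) → ↥(limT T),
      ∃ K : ↥(NullIdeal lam) → ↥(NullIdeal LebI),
        ∀ (y : ↥(Set.Icc (0 : ℝ) 1)) (A : ↥(NullIdeal lam)),
          ψ y ∈ A.1 → y ∈ (K A).1) :=
  stmt17_general T lam hlam hfree
end
end

section
/- Let X be a nonempty Polish space (separable and completely metrizable) equipped with its Borel σ-algebra, and let μ be a Borel probability measure on X with μ({x}) = 0 for every x ∈ X. Then there exists a Borel isomorphism f : X → [0,1] (a bijection such that both f and f⁻¹ are Borel measurable) such that μ(f⁻¹(B)) equals the Lebesgue measure of B for every Borel set B ⊆ [0,1]. -/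
/-!
Being atomless, `μ` lives on an uncountable space, so the Borel isomorphism theorem moves it to
an atomless probability measure `ν` on `ℝ`. Its distribution function `F` is continuous, hence
pushes `ν` forward to Lebesgue measure on `[0,1]`, and `F` is injective off the preimage of the
countably many values of its flat pieces. Also discarding `F⁻¹(C)`, for `C` the Cantor set,
costs nothing since `C` is Lebesgue-null, and makes both the discarded set and the complement of
the image uncountable. The Borel isomorphism theorem matches these two complements, and the
resulting Borel isomorphism `ℝ ≃ [0,1]` agrees with `F` `ν`-almost everywhere.
-/

open MeasureTheory

noncomputable section

open Set Filter ProbabilityTheory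
open scoped ENNReal

lemma volume_image_add_div_three (c : ℝ) (s : Set ℝ) :
    volume ((fun x => (c + x) / 3) '' s) = 3⁻¹ * volume s := by
  have : (fun x : ℝ => (c + x) / 3) = AffineMap.homothety (c / 2) (3⁻¹ : ℝ) := by
    funext x; simp [AffineMap.homothety_apply]; ring
  rw [this, Measure.addHaar_image_homothety, Module.finrank_self, pow_one, abs_of_pos (by norm_num),
    ENNReal.ofReal_inv_of_pos (by norm_num)]
  norm_num

lemma volume_preCantorSet_le (n : ℕ) : volume (preCantorSet n) ≤ (2 / 3 : ℝ≥0∞) ^ n := by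
  induction n with
  | zero => simp [preCantorSet_zero, Real.volume_Icc]
  | succ n ih =>
    have hdiv : (· / 3 : ℝ → ℝ) = fun x => (0 + x) / 3 := by simp
    calc volume (preCantorSet (n + 1))
        ≤ volume ((fun x => (0 + x) / 3) '' preCantorSet n)
          + volume ((fun x => (2 + x) / 3) '' preCantorSet n) := by
          rw [preCantorSet_succ, hdiv]
          exact measure_union_le _ _
      _ = 2 / 3 * volume (preCantorSet n) := by
          rw [volume_image_add_div_three, volume_image_add_div_three, ← add_mul, ← two_mul,
            ← div_eq_mul_inv]
      _ ≤ (2 / 3) ^ (n + 1) := by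
          rw [pow_succ']; gcongr

lemma volume_cantorSet : volume cantorSet = 0 := by
  refine le_antisymm (ge_of_tendsto' (ENNReal.tendsto_pow_atTop_nhds_zero_of_lt_one ?_)
    fun n => (measure_mono (iInter_subset _ n)).trans (volume_preCantorSet_le n)) zero_le
  exact ENNReal.div_lt_of_lt_mul' (by norm_num)

lemma not_countable_cantorSet : ¬ cantorSet.Countable := by
  rw [← countable_coe_iff, cantorSetEquivNatToBool.countable_iff, ← Cardinal.mk_le_aleph0_iff]
  simpa using Cardinal.aleph0_lt_continuum

theorem exists_measurableEquiv_eqOn_of_injOn {α β : Type*} [MeasurableSpace α]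
    [StandardBorelSpace α] [MeasurableSpace β] [StandardBorelSpace β]
    {f : α → β} {s : Set α}
    (hf : Measurable f) (hs : MeasurableSet s) (hinj : InjOn f s) (hsc : ¬ sᶜ.Countable)
    (hfsc : ¬ (f '' s)ᶜ.Countable) : ∃ e : α ≃ᵐ β, EqOn e f s := by
  classical
  have := hs.standardBorel
  have hemb : MeasurableEmbedding (s.domRestrict f) :=
    (hf.comp measurable_subtype_coe).measurableEmbedding (injOn_iff_injective.1 hinj)
  rw [← range_domRestrict] at hfsc
  have := hs.compl.standardBorel
  have := hemb.measurableSet_range.compl.standardBorel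
  let ψ : (sᶜ : Set α) ≃ᵐ ((range (s.domRestrict f))ᶜ : Set β) :=
    PolishSpace.measurableEquivOfNotCountable (by rwa [countable_coe_iff])
      (by rwa [countable_coe_iff])
  refine ⟨(MeasurableEquiv.sumCompl hs).symm.trans ((hemb.equivRange.sumCongr ψ).trans
    (MeasurableEquiv.sumCompl hemb.measurableSet_range)), fun x hx => ?_⟩
  have hx' : (MeasurableEquiv.sumCompl hs).symm x = .inl ⟨x, hx⟩ :=
    Equiv.sumCompl_symm_apply_of_pos hx
  rw [MeasurableEquiv.trans_apply, MeasurableEquiv.trans_apply, hx']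
  exact congrArg Subtype.val (hemb.equivRange_apply ⟨x, hx⟩)

section cdf

variable (ν : Measure ℝ)

def cdfIcc : ℝ → Icc (0 : ℝ) 1 :=
  codRestrict (cdf ν) _ fun x => ⟨cdf_nonneg ν x, cdf_le_one ν x⟩

lemma measurable_cdfIcc : Measurable (cdfIcc ν) :=
  (monotone_cdf ν).measurable.subtype_mk

def cdfExceptionalSet : Set ℝ :=
  cdf ν ⁻¹' ({t | ∃ x y, x < y ∧ cdf ν x = t ∧ cdf ν y = t} ∪ cantorSet)

lemma measurableSet_cdfExceptionalSet : MeasurableSet (cdfExceptionalSet ν) :=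
  (monotone_cdf ν).measurable <| (monotone_cdf ν).countable_setOfPred_two_preimages.measurableSet
    |>.union isClosed_cantorSet.measurableSet

lemma injOn_cdfIcc : InjOn (cdfIcc ν) (cdfExceptionalSet ν)ᶜ := by
  intro x hx y _ hFxy
  have hxy : cdf ν x = cdf ν y := congrArg Subtype.val hFxy
  by_contra hne
  rcases lt_or_gt_of_ne hne with h | h
  · exact hx (Or.inl ⟨x, y, h, rfl, hxy.symm⟩)
  · exact hx (Or.inl ⟨y, x, h, hxy.symm, rfl⟩)

lemma not_countable_compl_image_cdfIcc :
    ¬ (cdfIcc ν '' (cdfExceptionalSet ν)ᶜ)ᶜ.Countable := by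
  refine fun h => not_countable_cantorSet ((h.image Subtype.val).mono fun t ht => ?_)
  refine ⟨⟨t, cantorSet_subset_unitInterval ht⟩, ?_, rfl⟩
  rintro ⟨x, hx, hxt⟩
  have : cdf ν x = t := congrArg Subtype.val hxt
  exact hx (Or.inr (this ▸ ht))

variable [IsProbabilityMeasure ν] [NullSingletonClass ν]

lemma continuous_cdf : Continuous (cdf ν) := by
  refine continuous_iff_continuousAt.2 fun x => ?_
  have hjump : Function.leftLim (cdf ν) x = cdf ν x := by
    have h := (cdf ν).measure_singleton x
    rw [measure_cdf, measure_singleton, eq_comm, ENNReal.ofReal_eq_zero] at h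
    exact le_antisymm ((monotone_cdf ν).leftLim_le le_rfl) (by linarith)
  rw [continuousAt_iff_continuous_left_right, ← continuousWithinAt_Iio_iff_Iic,
    (monotone_cdf ν).continuousWithinAt_Iio_iff_leftLim_eq]
  exact ⟨hjump, (cdf ν).right_continuous x⟩

lemma measure_cdf_preimage_Iic {t : ℝ} (ht₀ : 0 ≤ t) (ht₁ : t < 1) :
    ν (cdf ν ⁻¹' Iic t) = ENNReal.ofReal t := by
  set S := cdf ν ⁻¹' Iic t
  rcases S.eq_empty_or_nonempty with hS | hS
  · have : t ≤ 0 := ge_of_tendsto (tendsto_cdf_atBot ν) (Eventually.of_forall fun x =>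
      (not_le.1 fun hx => hS.subset hx).le)
    simp [hS, le_antisymm this ht₀]
  have hbdd : BddAbove S := by
    obtain ⟨b, hb⟩ := ((tendsto_cdf_atTop ν).eventually_const_lt ht₁).exists_forall_of_atTop
    exact ⟨b, fun x hx => not_lt.1 fun hbx => (hb x hbx.le).not_ge hx⟩
  set c := sSup S
  have hc : c ∈ S := (isClosed_le (continuous_cdf ν) continuous_const).csSup_mem hS hbdd
  have hSc : S = Iic c := Subset.antisymm (fun x hx => le_csSup hbdd hx)
    fun x hx => (monotone_cdf ν hx).trans hc
  have hFc : cdf ν c = t := by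
    refine le_antisymm hc (ge_of_tendsto ((continuous_cdf ν).tendsto c |>.mono_left
      (nhdsWithin_le_nhds (s := Ioi c))) ?_)
    filter_upwards [self_mem_nhdsWithin] with x (hx : c < x)
    exact (not_le.1 fun h => (le_csSup hbdd h).not_gt hx).le
  rw [hSc, ← ofReal_cdf, hFc]

lemma map_cdf : ν.map (cdf ν) = volume.restrict (Icc 0 1) := by
  have hmeas : Measurable (cdf ν) := (monotone_cdf ν).measurable
  have := Measure.isProbabilityMeasure_map (μ := ν) hmeas.aemeasurable
  have : IsProbabilityMeasure (volume.restrict (Icc (0 : ℝ) 1)) := ⟨by simp⟩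
  refine Measure.ext_of_Iic _ _ fun t => ?_
  rw [Measure.map_apply hmeas measurableSet_Iic, Measure.restrict_apply measurableSet_Iic]
  rcases lt_or_ge t 0 with ht₀ | ht₀
  · have h₁ : cdf ν ⁻¹' Iic t = ∅ := eq_empty_of_forall_notMem fun x hx =>
      (ht₀.trans_le (cdf_nonneg ν x)).not_ge hx
    have h₂ : Iic t ∩ Icc 0 1 = ∅ := eq_empty_of_forall_notMem fun x hx =>
      (ht₀.trans_le hx.2.1).not_ge hx.1
    simp [h₁, h₂]
  rcases lt_or_ge t 1 with ht₁ | ht₁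
  · have : Iic t ∩ Icc 0 1 = Icc 0 t := by
      ext x
      exact ⟨fun h => ⟨h.2.1, h.1⟩, fun h => ⟨h.2, h.1, h.2.trans ht₁.le⟩⟩
    rw [measure_cdf_preimage_Iic ν ht₀ ht₁, this, Real.volume_Icc, sub_zero]
  · have h₁ : cdf ν ⁻¹' Iic t = univ :=
      eq_univ_of_forall fun x => (cdf_le_one ν x).trans ht₁
    rw [h₁, inter_eq_right.2 fun x hx => hx.2.trans ht₁]
    simp [Real.volume_Icc]

lemma Ioo_subset_range_cdf : Ioo 0 1 ⊆ range (cdf ν) := fun _ ht =>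
  mem_range_of_exists_le_of_exists_ge (continuous_cdf ν)
    ((tendsto_cdf_atBot ν).eventually_le_const ht.1).exists
    ((tendsto_cdf_atTop ν).eventually_const_le ht.2).exists

lemma map_cdfIcc : ν.map (cdfIcc ν) = LebI := by
  ext B hB
  have hval := MeasurableEmbedding.subtype_coe (measurableSet_Icc (a := (0 : ℝ)) (b := 1))
  have hpre : cdfIcc ν ⁻¹' B = cdf ν ⁻¹' (Subtype.val '' B) := by
    rw [show (cdf ν : ℝ → ℝ) = Subtype.val ∘ cdfIcc ν from rfl, preimage_comp,
      Subtype.val_injective.preimage_image]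
  rw [Measure.map_apply (measurable_cdfIcc ν) hB, hpre,
    ← Measure.map_apply (monotone_cdf ν).measurable (hval.measurableSet_image.2 hB), map_cdf,
    Measure.restrict_eq_self _ (Subtype.coe_image_subset _ _), LebI, hval.comap_apply]

lemma measure_cdfExceptionalSet : ν (cdfExceptionalSet ν) = 0 := by
  have hV := (monotone_cdf ν).countable_setOfPred_two_preimages
  have hVK := hV.measurableSet.union isClosed_cantorSet.measurableSet
  rw [cdfExceptionalSet, ← Measure.map_apply (monotone_cdf ν).measurable hVK, map_cdf,
    Measure.restrict_apply hVK]
  exact measure_mono_null inter_subset_left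
    (measure_union_null (hV.measure_zero _) volume_cantorSet)

lemma not_countable_cdfExceptionalSet : ¬ (cdfExceptionalSet ν).Countable := by
  refine fun h => not_countable_cantorSet
    (((h.image (cdf ν)).union ((countable_singleton 1).insert 0)).mono fun t ht => ?_)
  by_cases ht01 : t = 0 ∨ t = 1
  · exact Or.inr ht01
  obtain ⟨ht0, ht1⟩ := not_or.1 ht01
  have htI := cantorSet_subset_unitInterval ht
  obtain ⟨x, rfl⟩ := Ioo_subset_range_cdf ν ⟨htI.1.lt_of_ne' ht0, htI.2.lt_of_ne ht1⟩
  exact Or.inl ⟨x, Or.inr ht, rfl⟩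

theorem exists_measurableEquiv_map_eq_lebI :
    ∃ e : ℝ ≃ᵐ Icc (0 : ℝ) 1, ν.map e = LebI := by
  obtain ⟨e, he⟩ := exists_measurableEquiv_eqOn_of_injOn (measurable_cdfIcc ν)
    (measurableSet_cdfExceptionalSet ν).compl (injOn_cdfIcc ν)
    (by rw [compl_compl]; exact not_countable_cdfExceptionalSet ν)
    (not_countable_compl_image_cdfIcc ν)
  refine ⟨e, ?_⟩
  rw [← map_cdfIcc ν]
  exact Measure.map_congr <|
    (measure_eq_zero_iff_ae_notMem.1 (measure_cdfExceptionalSet ν)).mono fun _ hx => he hx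

end cdf

theorem stmt18_general (X : Type*) [TopologicalSpace X] [PolishSpace X]
    [MeasurableSpace X] [BorelSpace X]
    (μ : Measure X) (hμ : IsProbabilityMeasure μ)
    (hfree : ∀ x : X, μ {x} = 0) :
    ∃ e : X ≃ᵐ ↥(Set.Icc (0 : ℝ) 1),
      ∀ B : Set ↥(Set.Icc (0 : ℝ) 1), MeasurableSet B → μ (e ⁻¹' B) = LebI B := by
  have : NullSingletonClass μ := ⟨hfree⟩
  have hX : ¬ Countable X := fun _ => by simpa using countable_univ.measure_zero μ
  let e₀ : X ≃ᵐ ℝ := PolishSpace.measurableEquivOfNotCountable hX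
    fun _ => Cardinal.not_countable_real countable_univ
  have : IsProbabilityMeasure (μ.map e₀) :=
    Measure.isProbabilityMeasure_map e₀.measurable.aemeasurable
  have : NullSingletonClass (μ.map e₀) := ⟨fun x => by
    rw [e₀.map_apply, ← e₀.image_symm, image_singleton]; exact measure_singleton _⟩
  obtain ⟨e₁, he₁⟩ := exists_measurableEquiv_map_eq_lebI (μ.map e₀)
  refine ⟨e₀.trans e₁, fun B _ => ?_⟩
  rw [← he₁, e₁.map_apply, e₀.map_apply]
  rfl

theorem stmt18 (X : Type*) [TopologicalSpace X] [PolishSpace X]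
    [MeasurableSpace X] [BorelSpace X] [Nonempty X]
    (μ : Measure X) (hμ : IsProbabilityMeasure μ)
    (hfree : ∀ x : X, μ {x} = 0) :
    ∃ e : X ≃ᵐ ↥(Set.Icc (0 : ℝ) 1),
      ∀ B : Set ↥(Set.Icc (0 : ℝ) 1), MeasurableSet B → μ (e ⁻¹' B) = LebI B :=
  stmt18_general X μ hμ hfree
end
end
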